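/- Let F be a finite free R-module and X : F → F* an R-linear map. For all integers i, j and all a ∈ ⋀^{i+j} F and b ∈ ⋀^j F, one has (⋀^i X*)( ((⋀^j X)(b)) ⌟ a ) = b ⌟ ( (⋀^{i+j} X*)(a) ), where ⌟ denotes contraction. -/

import Mathlib

/-! Both sides are algebra homomorphisms in `b` (contraction turns products into composites),
so it suffices to take `b = p ∈ F`. Then it is naturality of contraction by a single form:
`⋀ f (d ⌟ x) = d' ⌟ ⋀ f x` whenever `d' ∘ f = d`, here with `f = X* ∘ ev`, `d = X p`,
`d' = ev p`, which follows from the Leibniz rule for contraction. -/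

open ExteriorAlgebra

noncomputable def extMap (R : Type*) [CommRing R] {M N : Type*} [AddCommGroup M] [AddCommGroup N]
    [Module R M] [Module R N] (f : M →ₗ[R] N) :
    ExteriorAlgebra R M →ₐ[R] ExteriorAlgebra R N :=
  ExteriorAlgebra.lift R ⟨(ExteriorAlgebra.ι R).comp f, fun m => by
    simp [ExteriorAlgebra.ι_sq_zero (f m)]⟩

noncomputable def extContract (R : Type*) [CommRing R] {M : Type*} [AddCommGroup M] [Module R M] :
    ExteriorAlgebra R (Module.Dual R M) →ₐ[R] Module.End R (ExteriorAlgebra R M) :=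
  ExteriorAlgebra.lift R ⟨(CliffordAlgebra.contractLeft (Q := (0 : QuadraticForm R M)) :
      Module.Dual R M →ₗ[R] Module.End R (ExteriorAlgebra R M)), fun d => by
    refine LinearMap.ext fun x => ?_
    rw [Module.End.mul_apply, LinearMap.zero_apply]
    exact CliffordAlgebra.contractLeft_contractLeft (Q := (0 : QuadraticForm R M)) (d := d) x⟩

noncomputable def extContractD (R : Type*) [CommRing R] {M : Type*} [AddCommGroup M] [Module R M] :
    ExteriorAlgebra R M →ₐ[R] Module.End R (ExteriorAlgebra R (Module.Dual R M)) :=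
  ExteriorAlgebra.lift R ⟨(CliffordAlgebra.contractLeft
      (Q := (0 : QuadraticForm R (Module.Dual R M))) :
      Module.Dual R (Module.Dual R M) →ₗ[R] _).comp (Module.Dual.eval R M), fun m => by
    refine LinearMap.ext fun x => ?_
    rw [Module.End.mul_apply, LinearMap.zero_apply, LinearMap.comp_apply]
    exact CliffordAlgebra.contractLeft_contractLeft
      (Q := (0 : QuadraticForm R (Module.Dual R M))) (d := Module.Dual.eval R M m) x⟩

def extDeg (R : Type*) [CommRing R] {M : Type*} [AddCommGroup M] [Module R M] (i : ℕ)
    (x : ExteriorAlgebra R M) : Prop :=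
  x ∈ (LinearMap.range (ExteriorAlgebra.ι R : M →ₗ[R] ExteriorAlgebra R M)) ^ i

section Naturality

variable {R : Type*} [CommRing R] {M N P : Type*} [AddCommGroup M] [AddCommGroup N]
  [AddCommGroup P] [Module R M] [Module R N] [Module R P]

@[simp]
lemma extMap_ι (f : M →ₗ[R] N) (m : M) : extMap R f (ι R m) = ι R (f m) := by
  simp [extMap]

@[simp]
lemma extContract_ι (d : Module.Dual R M) :
    extContract R (ι R d) = CliffordAlgebra.contractLeft (Q := (0 : QuadraticForm R M)) d := by
  simp [extContract]

lemma extContractD_eq_extContract_comp_extMap_eval :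
    extContractD R = (extContract R).comp (extMap R (Module.Dual.eval R M)) :=
  ExteriorAlgebra.hom_ext <| LinearMap.ext fun m => by simp [extContractD]

lemma extMap_contractLeft (f : M →ₗ[R] N) (d : Module.Dual R M) (d' : Module.Dual R N)
    (h : d' ∘ₗ f = d) (x : ExteriorAlgebra R M) :
    extMap R f (CliffordAlgebra.contractLeft (Q := (0 : QuadraticForm R M)) d x) =
      CliffordAlgebra.contractLeft (Q := (0 : QuadraticForm R N)) d' (extMap R f x) := by
  induction x using CliffordAlgebra.left_induction with
  | algebraMap r => simp [CliffordAlgebra.contractLeft_algebraMap]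
  | add x y hx hy => simp only [map_add, hx, hy]
  | ι_mul x m hx =>
    have hι : extMap R f (CliffordAlgebra.ι _ m) = CliffordAlgebra.ι _ (f m) := extMap_ι f m
    rw [CliffordAlgebra.contractLeft_ι_mul, map_sub, map_smul, map_mul, hι, hx, map_mul, hι,
      CliffordAlgebra.contractLeft_ι_mul, ← h, LinearMap.comp_apply]

lemma extMap_extContract (f : M →ₗ[R] N) (g : P →ₗ[R] Module.Dual R M)
    (h : P →ₗ[R] Module.Dual R N) (hgh : ∀ p, h p ∘ₗ f = g p) (b : ExteriorAlgebra R P)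
    (a : ExteriorAlgebra R M) :
    extMap R f (extContract R (extMap R g b) a) = extContract R (extMap R h b) (extMap R f a) := by
  induction b using CliffordAlgebra.induction generalizing a with
  | algebraMap r => simp
  | ι p => simpa using extMap_contractLeft f (g p) (h p) (hgh p) a
  | mul b₁ b₂ h₁ h₂ => simp only [map_mul, Module.End.mul_apply, h₁, h₂]
  | add b₁ b₂ h₁ h₂ => simp only [map_add, LinearMap.add_apply, h₁, h₂]

end Naturality

theorem exteriorPower_map_contract_general (R : Type*) [CommRing R]
    (F : Type*) [AddCommGroup F] [Module R F]
    (X : F →ₗ[R] Module.Dual R F)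
    (a b : ExteriorAlgebra R F) :
    extMap R (X.dualMap ∘ₗ Module.Dual.eval R F) (extContract R (extMap R X b) a) =
      extContractD R b (extMap R (X.dualMap ∘ₗ Module.Dual.eval R F) a) := by
  rw [extContractD_eq_extContract_comp_extMap_eval]
  exact extMap_extContract _ X (Module.Dual.eval R F) (fun _ => rfl) b a

/-- Observation 1.9(a): for `X : F → F*`, `a ∈ ⋀^(i+j) F` and `b ∈ ⋀^j F`,
`(⋀^i X*)( ((⋀^j X)(b)) ⌟ a ) = b ⌟ ( (⋀^(i+j) X*)(a) )`. -/
theorem exteriorPower_map_contract (R : Type*) [CommRing R]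
    (F : Type*) [AddCommGroup F] [Module R F] [Module.Free R F] [Module.Finite R F]
    (X : F →ₗ[R] Module.Dual R F) (i j : ℕ)
    (a b : ExteriorAlgebra R F) (ha : extDeg R (i + j) a) (hb : extDeg R j b) :
    extMap R (X.dualMap ∘ₗ Module.Dual.eval R F) (extContract R (extMap R X b) a) =
      extContractD R b (extMap R (X.dualMap ∘ₗ Module.Dual.eval R F) a) :=
  exteriorPower_map_contract_general R F X a b
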